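/- arXiv:0803.1529 — 4 statements merged into one kernel-verified Lean document; each statement's English description precedes it below -/
import Mathlib

section
/- Let R be a ring and M a bounded chain complex of left R-modules. Suppose the identity chain map of M is chain homotopic to a chain map e : M → M such that for every degree n the component e_n : M_n → M_n factors through a finitely generated free R-module (i.e., e_n = β ∘ α for some natural number k and R-linear maps α : M_n → R^k and β : R^k → M_n). Then there exist a bounded chain complex T of finitely generated projective R-modules and chain maps f : M → T and g : T → M such that g ∘ f is chain homotopic to the identity of M. -/
open CategoryTheory

/-- A ℤ-indexed chain complex is bounded if all but finitely many terms are zero. -/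
def IsBoundedComplex {R : Type} [Ring R] (M : ChainComplex (ModuleCat.{0} R) ℤ) : Prop :=
  {n : ℤ | ¬ Subsingleton (M.X n)}.Finite

/-- Every term of the complex is a finitely generated projective `R`-module. -/
def IsFinProjComplex {R : Type} [Ring R] (T : ChainComplex (ModuleCat.{0} R) ℤ) : Prop :=
  ∀ n : ℤ, Module.Finite R (T.X n) ∧ Module.Projective R (T.X n)

/-- A linear map factors through a finitely generated free module `R^k`. -/
def FactorsThroughFinFree {R : Type} [Ring R] {X Y : Type} [AddCommGroup X] [Module R X]
    [AddCommGroup Y] [Module R Y] (e : X →ₗ[R] Y) : Prop :=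
  ∃ (k : ℕ) (α : X →ₗ[R] (Fin k → R)) (β : (Fin k → R) →ₗ[R] Y), e = β ∘ₗ α

/-! Write `e = β ∘ α` degreewise, with `1 - e = hd + dh`. Since `e` commutes with `d`, the maps
`β ≫ d ≫ α` square to zero and form a complex on the modules `P n`, and `f = α ∘ (1 - dh)`,
`g = (1 - hd) ∘ β` are chain maps. For `p = dh` and `q = hd` one has `qp = hddh = 0`, so
`g ∘ f = (1 - q)(1 - p - q)(1 - p) = 1 - 2(p + q) + p² + q²`, which is `1 + dK + Kd` for
`K = hdh - 2h`. -/

theorem one_sub_mul_mul_one_sub {A : Type*} [Ring A] {p q e : A} (h : q + p + e = 1)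
    (hqp : q * p = 0) : (1 - q) * e * (1 - p) = q * q - 2 • q + (p * p - 2 • p) + 1 := by
  obtain rfl : e = 1 - q - p := by rw [← h]; abel
  calc (1 - q) * (1 - q - p) * (1 - p)
      = q * q - 2 • q + (p * p - 2 • p) + 1 + 3 • (q * p) - q * (q * p) - q * p * p := by
        noncomm_ring
    _ = _ := by simp [hqp]

variable {C : Type*} [Category* C] [Preadditive C] {ι : Type*} {c : ComplexShape ι}

namespace HomologicalComplex

variable {M : HomologicalComplex C c}

theorem prevD_comp_dNext (hom : ∀ i j, M.X i ⟶ M.X j) (i : ι) :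
    prevD i hom ≫ dNext i hom = 0 := by
  simp [prevD, dNext]

theorem dNext_hom_comp_d_comp_hom_sub (hom : ∀ i j, M.X i ⟶ M.X j) (i : ι) :
    dNext i (fun j k => hom j k ≫ M.d k j ≫ hom j k - 2 • hom j k) =
      dNext i hom ≫ dNext i hom - 2 • dNext i hom := by
  simp [dNext, Preadditive.comp_sub]

theorem prevD_hom_comp_d_comp_hom_sub (hom : ∀ i j, M.X i ⟶ M.X j) (i : ι) :
    prevD i (fun j k => hom j k ≫ M.d k j ≫ hom j k - 2 • hom j k) =
      prevD i hom ≫ prevD i hom - 2 • prevD i hom := by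
  simp [prevD, Preadditive.sub_comp]

variable (M) (e : M ⟶ M) {P : ι → C} (α : ∀ i, M.X i ⟶ P i) (β : ∀ i, P i ⟶ M.X i)
  (hαβ : ∀ i, α i ≫ β i = e.f i)

def ofFactorization : HomologicalComplex C c where
  X := P
  d i j := β i ≫ M.d i j ≫ α j
  shape i j hij := by simp [M.shape i j hij]
  d_comp_d' i j k _ _ := by simp [reassoc_of% hαβ j]

end HomologicalComplex

namespace Homotopy

open HomologicalComplex

variable {M : HomologicalComplex C c} {e : M ⟶ M} (h : Homotopy (𝟙 M) e)

theorem id_eq_dNext_add_prevD_add (i : ι) :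
    𝟙 (M.X i) = dNext i h.hom + prevD i h.hom + e.f i := by
  simpa using h.comm i

theorem d_comp_id_sub_prevD (i j : ι) :
    M.d i j ≫ (𝟙 _ - prevD j h.hom) = M.d i j ≫ e.f j := by
  rw [h.id_eq_dNext_add_prevD_add j]
  simp

theorem id_sub_dNext_comp_d (i j : ι) :
    (𝟙 _ - dNext i h.hom) ≫ M.d i j = e.f i ≫ M.d i j := by
  rw [h.id_eq_dNext_add_prevD_add i]
  simp

variable {P : ι → C} (α : ∀ i, M.X i ⟶ P i) (β : ∀ i, P i ⟶ M.X i)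
  (hαβ : ∀ i, α i ≫ β i = e.f i)

noncomputable def toOfFactorization : M ⟶ M.ofFactorization e α β hαβ where
  f i := (𝟙 _ - prevD i h.hom) ≫ α i
  comm' i j _ := by
    change ((𝟙 _ - prevD i h.hom) ≫ α i) ≫ β i ≫ M.d i j ≫ α j =
      M.d i j ≫ (𝟙 _ - prevD j h.hom) ≫ α j
    rw [Category.assoc, reassoc_of% hαβ i, e.comm_assoc, reassoc_of% h.d_comp_id_sub_prevD]
    simp [Preadditive.sub_comp]

noncomputable def fromOfFactorization : M.ofFactorization e α β hαβ ⟶ M where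
  f i := β i ≫ (𝟙 _ - dNext i h.hom)
  comm' i j _ := by
    change (β i ≫ (𝟙 _ - dNext i h.hom)) ≫ M.d i j =
      (β i ≫ M.d i j ≫ α j) ≫ β j ≫ (𝟙 _ - dNext j h.hom)
    rw [Category.assoc, h.id_sub_dNext_comp_d, Category.assoc, Category.assoc,
      reassoc_of% hαβ j, ← e.comm_assoc]
    simp [Preadditive.comp_sub]

noncomputable def toOfFactorizationCompFrom :
    Homotopy (h.toOfFactorization α β hαβ ≫ h.fromOfFactorization α β hαβ) (𝟙 M) where
  hom i j := h.hom i j ≫ M.d j i ≫ h.hom i j - 2 • h.hom i j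
  zero i j hij := by simp [h.zero i j hij]
  comm i := by
    rw [dNext_hom_comp_d_comp_hom_sub, prevD_hom_comp_d_comp_hom_sub]
    change ((𝟙 _ - prevD i h.hom) ≫ α i) ≫ β i ≫ (𝟙 _ - dNext i h.hom) = _
    rw [Category.assoc, reassoc_of% hαβ i]
    exact one_sub_mul_mul_one_sub (A := End (M.X i)) (h.id_eq_dNext_add_prevD_add i).symm
      (prevD_comp_dNext h.hom i)

end Homotopy

theorem FactorsThroughFinFree.exists_factorization_zero_of_subsingleton {R : Type} [Ring R]
    {X Y : Type} [AddCommGroup X] [Module R X] [AddCommGroup Y] [Module R Y] {e : X →ₗ[R] Y}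
    (he : FactorsThroughFinFree e) :
    ∃ (k : ℕ) (α : X →ₗ[R] (Fin k → R)) (β : (Fin k → R) →ₗ[R] Y),
      e = β ∘ₗ α ∧ (Subsingleton X → k = 0) := by
  by_cases hX : Subsingleton X
  · exact ⟨0, 0, 0, LinearMap.ext fun x => by simp [Subsingleton.elim x 0], fun _ => rfl⟩
  · obtain ⟨k, α, β, rfl⟩ := he
    exact ⟨k, α, β, rfl, fun h => absurd h hX⟩

theorem IsBoundedComplex.of_subsingleton_imp {R : Type} [Ring R]
    {M T : ChainComplex (ModuleCat.{0} R) ℤ} (hM : IsBoundedComplex M)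
    (hT : ∀ n, Subsingleton (M.X n) → Subsingleton (T.X n)) : IsBoundedComplex T :=
  hM.subset fun n hTn hMn => hTn (hT n hMn)

/-- If the identity of a bounded complex `M` is chain homotopic to a chain map `e` whose
degreewise components factor through finitely generated free modules (an algebraically nuclear
endomorphism), then `M` is dominated up to homotopy by a bounded complex of finitely generated
projective modules. -/
theorem stmt1 (R : Type) [Ring R] (M : ChainComplex (ModuleCat.{0} R) ℤ)
    (hM : IsBoundedComplex M) (e : M ⟶ M)
    (he : ∀ n : ℤ, FactorsThroughFinFree ((e.f n).hom : M.X n →ₗ[R] M.X n))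
    (h : Homotopy (𝟙 M) e) :
    ∃ T : ChainComplex (ModuleCat.{0} R) ℤ, IsBoundedComplex T ∧ IsFinProjComplex T ∧
      ∃ (f : M ⟶ T) (g : T ⟶ M), Nonempty (Homotopy (f ≫ g) (𝟙 M)) := by
  choose k α β hαβ hk using fun n => (he n).exists_factorization_zero_of_subsingleton
  have hαβ' (n : ℤ) : ModuleCat.ofHom (α n) ≫ ModuleCat.ofHom (β n) = e.f n :=
    ModuleCat.hom_ext (hαβ n).symm
  refine ⟨M.ofFactorization e _ _ hαβ', hM.of_subsingleton_imp fun n hn => ?_,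
    fun n => ⟨inferInstanceAs (Module.Finite R (Fin (k n) → R)),
      inferInstanceAs (Module.Projective R (Fin (k n) → R))⟩,
    _, _, ⟨h.toOfFactorizationCompFrom _ _ hαβ'⟩⟩
  change Subsingleton (Fin (k n) → R)
  rw [hk n hn]
  infer_instance
end

section
/- Let R be a ring, I a two-sided ideal of R, and M a bounded chain complex of left R-modules. Let M·I denote the subcomplex whose degree-n term is the submodule I•M_n generated by {a • m : a ∈ I, m ∈ M_n} (this is a subcomplex since the differentials are R-linear). Then the inclusion chain map M·I → M is a homotopy equivalence of chain complexes if and only if the identity of M is chain homotopic to a chain map f : M → M satisfying f_n(M_n) ⊆ I•M_n for every degree n. -/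
/-! A homotopy inverse `g` of the inclusion `ι : M·I ⟶ M` yields `f = g ≫ ι`, which lands in
`M·I` and is homotopic to `𝟙 M`. Conversely, `f` corestricts to `g : M ⟶ M·I` with `g ≫ ι = f`,
while `ι ≫ g` is the restriction of `f` to `M·I`; a homotopy `𝟙 M ≃ f` consists of `R`-linear
maps, which preserve the submodules `I • M_n`, so it restricts to a homotopy `𝟙 ≃ ι ≫ g`. -/

open CategoryTheory

lemma smul_top_le {R : Type} [Ring R] {X Y : Type} [AddCommGroup X] [Module R X]
    [AddCommGroup Y] [Module R Y] (I : Ideal R) (f : X →ₗ[R] Y) :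
    ∀ x ∈ I • (⊤ : Submodule R X), f x ∈ I • (⊤ : Submodule R Y) := by
  intro x hx
  have h1 : f x ∈ (I • (⊤ : Submodule R X)).map f := Submodule.mem_map_of_mem hx
  rw [Submodule.map_smul''] at h1
  have h2 : I • (⊤ : Submodule R X).map f ≤ I • (⊤ : Submodule R Y) :=
    smul_mono_right I le_top
  exact h2 h1

/-- The subcomplex `M·I` of a chain complex `M` of left `R`-modules, whose degree-`n` term is
the submodule `I • M_n` generated by `{a • m : a ∈ I, m ∈ M_n}`. -/
def smulSubcomplex {R : Type} [Ring R] (I : Ideal R)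
    (M : ChainComplex (ModuleCat.{0} R) ℤ) : ChainComplex (ModuleCat.{0} R) ℤ where
  X n := ModuleCat.of R (I • (⊤ : Submodule R (M.X n)) : Submodule R (M.X n))
  d i j := ModuleCat.ofHom (LinearMap.restrict (M.d i j).hom (smul_top_le I (M.d i j).hom))
  shape i j h := by
    apply ModuleCat.hom_ext; apply LinearMap.ext; intro x
    apply Subtype.ext
    exact DFunLike.congr_fun (congrArg ModuleCat.Hom.hom (M.shape i j h)) x.1
  d_comp_d' i j k _ _ := by
    apply ModuleCat.hom_ext; apply LinearMap.ext; intro x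
    apply Subtype.ext
    exact DFunLike.congr_fun (congrArg ModuleCat.Hom.hom (M.d_comp_d i j k)) x.1

/-- The inclusion chain map `M·I ⟶ M`. -/
def smulSubcomplexIncl {R : Type} [Ring R] (I : Ideal R)
    (M : ChainComplex (ModuleCat.{0} R) ℤ) : smulSubcomplex I M ⟶ M where
  f n := ModuleCat.ofHom (I • (⊤ : Submodule R (M.X n))).subtype
  comm' i j _ := by
    apply ModuleCat.hom_ext; apply LinearMap.ext; intro x
    rfl

namespace smulSubcomplex

variable {R : Type} [Ring R] (I : Ideal R) {M N : ChainComplex (ModuleCat.{0} R) ℤ}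

def map (φ : M ⟶ N) : smulSubcomplex I M ⟶ smulSubcomplex I N where
  f n := ModuleCat.ofHom (LinearMap.restrict (φ.f n).hom (smul_top_le I (φ.f n).hom))
  comm' i j _ := by
    ext x
    exact Subtype.ext (ConcreteCategory.congr_hom (φ.comm i j) x.1)

theorem map_id : map I (𝟙 M) = 𝟙 (smulSubcomplex I M) := rfl

def lift (φ : N ⟶ M) (hφ : ∀ (n : ℤ) (m : N.X n), (φ.f n) m ∈ I • (⊤ : Submodule R (M.X n))) :
    N ⟶ smulSubcomplex I M where
  f n := ModuleCat.ofHom (LinearMap.codRestrict _ (φ.f n).hom (hφ n))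
  comm' i j _ := by
    ext x
    exact Subtype.ext (ConcreteCategory.congr_hom (φ.comm i j) x)

variable {I}

theorem lift_comp_incl (φ : N ⟶ M) (hφ) :
    lift I φ hφ ≫ smulSubcomplexIncl I M = φ := rfl

theorem incl_comp_lift (φ : N ⟶ M) (hφ) :
    smulSubcomplexIncl I N ≫ lift I φ hφ = map I φ := rfl

def mapHomotopy {φ ψ : M ⟶ N} (H : Homotopy φ ψ) : Homotopy (map I φ) (map I ψ) where
  hom i j := ModuleCat.ofHom (LinearMap.restrict (H.hom i j).hom (smul_top_le I (H.hom i j).hom))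
  zero i j h := by
    ext x
    exact ConcreteCategory.congr_hom (H.zero i j h) x.1
  comm i := by
    ext x
    exact Subtype.ext (ConcreteCategory.congr_hom (H.comm i) x.1)

end smulSubcomplex

theorem stmt3_general (R : Type) [Ring R] (I : Ideal R)
    (M : ChainComplex (ModuleCat.{0} R) ℤ) :
    (∃ e : HomotopyEquiv (smulSubcomplex I M) M, e.hom = smulSubcomplexIncl I M) ↔
    (∃ f : M ⟶ M, (∀ (n : ℤ) (m : M.X n), (f.f n) m ∈ I • (⊤ : Submodule R (M.X n))) ∧
      Nonempty (Homotopy (𝟙 M) f)) := by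
  constructor
  · rintro ⟨e, he⟩
    refine ⟨e.inv ≫ e.hom, fun n m => ?_, ⟨e.homotopyInvHomId.symm⟩⟩
    rw [he]
    exact ((e.inv.f n) m).2
  · rintro ⟨f, hf, ⟨H⟩⟩
    refine ⟨⟨smulSubcomplexIncl I M, smulSubcomplex.lift I f hf, ?_, ?_⟩, rfl⟩
    · rw [smulSubcomplex.incl_comp_lift, ← smulSubcomplex.map_id]
      exact (smulSubcomplex.mapHomotopy H).symm
    · rw [smulSubcomplex.lift_comp_incl]
      exact H.symm

/-- For a two-sided ideal `I` of `R` and a bounded chain complex `M` of left `R`-modules, the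
inclusion `M·I ⟶ M` is a homotopy equivalence if and only if the identity of `M` is chain
homotopic to a chain map `f : M ⟶ M` with `f_n(M_n) ⊆ I • M_n` in every degree. -/
theorem stmt3 (R : Type) [Ring R] (I : Ideal R) (hI : ∀ a ∈ I, ∀ r : R, a * r ∈ I)
    (M : ChainComplex (ModuleCat.{0} R) ℤ) (hM : IsBoundedComplex M) :
    (∃ e : HomotopyEquiv (smulSubcomplex I M) M, e.hom = smulSubcomplexIncl I M) ↔
    (∃ f : M ⟶ M, (∀ (n : ℤ) (m : M.X n), (f.f n) m ∈ I • (⊤ : Submodule R (M.X n))) ∧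
      Nonempty (Homotopy (𝟙 M) f)) :=
  stmt3_general R I M
end

section
/- Let A be an associative algebra over ℂ carrying a topology making it a topological ring with continuous scalar multiplication. Suppose there is an increasing sequence (A_n) of subalgebras of A, each equipped with a topology τ_n making it a completely metrizable topological ℂ-algebra (addition, multiplication and scalar multiplication continuous) such that the inclusion (A_n, τ_n) → A is continuous, and suppose each (A_n, τ_n) is admissible: there exists a neighborhood U_n of 0 in τ_n such that for every compact subset K of U_n the multiplicative closure ⋃_{m ≥ 1} K^m is totally bounded for τ_n. Assume moreover that every totally bounded subset of A is contained in some A_n and is totally bounded for the topology τ_n. Then A is multiplicatively convex for the precompact bornology: for every totally bounded subset S of A there exists a real number t > 0 such that the multiplicative closure ⋃_{m ≥ 1} (t⁻¹ • S)^m is totally bounded in A. -/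
/-!
A totally bounded `T ⊆ A` lies in some `A_n` and is totally bounded there. By Klee's theorem
`A_n` is complete for its group uniformity: a completely metrizable dense subgroup is a dense
`Gδ` of the completion, so it meets each of its translates `x - A_n` and is therefore everything.
Hence `closure T` is compact in `A_n`. Being bounded, `T` is absorbed by a closed neighbourhood
`V ⊆ U_n`, so for large `t` the compact set `t⁻¹ • closure T` lies in `U_n`; its multiplicative
closure is totally bounded in `A_n`, hence in `A` since the inclusion is a continuous additive map.
-/

open scoped Pointwise

/-- A subset `s` of an additive group with a (given) topology `τ` is totally bounded if for
every neighborhood `V` of `0` finitely many translates of `V` cover `s`. -/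
def TotBddAdd {A : Type} [AddCommGroup A] (τ : TopologicalSpace A) (s : Set A) : Prop :=
  ∀ V ∈ @nhds A τ 0, ∃ F : Finset A, s ⊆ ⋃ x ∈ F, (fun v => x + v) '' V

/-- The multiplicative closure `⋃_{m ≥ 1} s^m` of a subset of a monoid. -/
def mulClosure {A : Type} [Monoid A] (s : Set A) : Set A :=
  ⋃ m : ℕ, ⋃ (_ : 1 ≤ m), s ^ m

open Filter Set Topology TopologicalSpace UniformSpace
open scoped Uniformity

theorem IsDenseInducing.isGδ_range {X Z : Type*} [TopologicalSpace X]
    [IsCompletelyMetrizableSpace X] [TopologicalSpace Z] [T2Space Z] {f : X → Z}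
    (hf : IsDenseInducing f) : IsGδ (range f) := by
  let := upgradeIsCompletelyMetrizable X
  let u : ℕ → Set Z := fun n =>
    ⋃₀ {V | IsOpen V ∧ ∀ a ∈ f ⁻¹' V, ∀ b ∈ f ⁻¹' V, dist a b < 1 / (n + 1)}
  suffices range f = ⋂ n, u n from this ▸ .iInter_of_isOpen fun n => isOpen_sUnion fun _ h => h.1
  refine Subset.antisymm ?_ fun z hz => ?_
  · rintro _ ⟨x, rfl⟩
    refine mem_iInter.2 fun n => ?_
    set ε : ℝ := 1 / (n + 1)
    obtain ⟨V, hVo, hV⟩ := hf.isInducing.isOpen_iff.1 (Metric.isOpen_ball (x := x) (ε := ε / 2))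
    refine ⟨V, ⟨hVo, fun a ha b hb => ?_⟩, ?_⟩
    · rw [hV, Metric.mem_ball] at ha hb
      linarith [dist_triangle_right a b x]
    · rw [← mem_preimage, hV]
      exact Metric.mem_ball_self (by positivity)
  · have := hf.comap_nhds_neBot z
    have hcauchy : Cauchy (comap f (𝓝 z)) := by
      refine Metric.cauchy_iff.2 ⟨inferInstance, fun ε hε => ?_⟩
      obtain ⟨n, hn⟩ := exists_nat_one_div_lt hε
      obtain ⟨V, ⟨hVo, hV⟩, hzV⟩ := mem_sUnion.1 (mem_iInter.1 hz n)
      exact ⟨f ⁻¹' V, preimage_mem_comap (hVo.mem_nhds hzV),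
        fun a ha b hb => (hV a ha b hb).trans hn⟩
    obtain ⟨x, hx⟩ := CompleteSpace.complete hcauchy
    exact ⟨x, tendsto_nhds_unique ((hf.continuous.tendsto x).mono_left hx) tendsto_comap⟩

theorem IsUniformAddGroup.completeSpace_of_isCompletelyMetrizableSpace (Y : Type*)
    [AddCommGroup Y] [UniformSpace Y] [IsUniformAddGroup Y] [IsCompletelyMetrizableSpace Y] :
    CompleteSpace Y := by
  have : (𝓤 Y).IsCountablyGenerated := IsUniformAddGroup.uniformity_countably_generated
  -- makes `Completion Y` a complete metric space, hence a Baire space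
  let := UniformSpace.pseudoMetricSpace Y
  have hrange := Completion.isDenseInducing_coe (α := Y)
  have hsurj : Function.Surjective ((↑) : Y → Completion Y) := by
    intro x
    have hGδ := hrange.isGδ_range
    obtain ⟨_, ⟨a, rfl⟩, b, hb⟩ := (Dense.inter_of_Gδ hGδ
      (hGδ.preimage (Homeomorph.subLeft x).continuous) hrange.dense
      ((Homeomorph.subLeft x).isOpenQuotientMap.dense_preimage_iff.2 hrange.dense)).nonempty
    refine ⟨b + a, ?_⟩
    rw [Completion.coe_add, hb]
    exact sub_add_cancel x _
  rw [completeSpace_iff_isComplete_range (Completion.isUniformInducing_coe Y), hsurj.range_eq]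
  exact isComplete_univ

theorem TotBddAdd.mono {Y : Type} [AddCommGroup Y] {τ : TopologicalSpace Y} {s t : Set Y}
    (h : TotBddAdd τ t) (hst : s ⊆ t) : TotBddAdd τ s := fun V hV =>
  (h V hV).imp fun _ hF => hst.trans hF

theorem TotBddAdd.totallyBounded {Y : Type} [AddCommGroup Y] [UniformSpace Y]
    [IsUniformAddGroup Y] {s : Set Y} (h : TotBddAdd inferInstance s) : TotallyBounded s := by
  refine totallyBounded_iff_subset_finite_iUnion_nhds_zero.2 fun V hV => ?_
  obtain ⟨F, hF⟩ := h V hV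
  exact ⟨F, F.finite_toSet, hF⟩

theorem TotBddAdd.image {F : Type*} {Y B : Type} [AddCommGroup Y] [AddCommGroup B]
    [FunLike F Y B] [AddMonoidHomClass F Y B] {τY : TopologicalSpace Y} {τB : TopologicalSpace B}
    (f : F) (hf : Continuous[τY, τB] f) {s : Set Y} (h : TotBddAdd τY s) :
    TotBddAdd τB (f '' s) := by
  classical
  intro V hV
  have hV' : f ⁻¹' V ∈ @nhds Y τY 0 := by
    apply hf.continuousAt.preimage_mem_nhds
    rwa [map_zero]
  obtain ⟨F, hF⟩ := h _ hV'
  refine ⟨F.image f, ?_⟩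
  rintro _ ⟨y, hy, rfl⟩
  obtain ⟨x, hx, v, hv, rfl⟩ := by simpa only [mem_iUnion, mem_image] using hF hy
  simp only [mem_iUnion, mem_image, Finset.mem_image]
  exact ⟨f x, ⟨x, hx, rfl⟩, f v, hv, (map_add f x v).symm⟩

theorem mulClosure_mono {M : Type} [Monoid M] {s t : Set M} (h : s ⊆ t) :
    mulClosure s ⊆ mulClosure t :=
  iUnion₂_mono fun _ _ => pow_subset_pow_left h

theorem image_mulClosure {F : Type*} {M N : Type} [Monoid M] [Monoid N] [FunLike F M N]
    [MonoidHomClass F M N] (f : F) (s : Set M) : f '' mulClosure s = mulClosure (f '' s) := by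
  simp only [mulClosure, image_iUnion, image_pow]

theorem Bornology.IsVonNBounded.exists_pos_inv_smul_subset {E : Type*} [AddCommGroup E]
    [Module ℂ E] [TopologicalSpace E] {s V : Set E} (hs : IsVonNBounded ℂ s)
    (hV : V ∈ 𝓝 (0 : E)) : ∃ t : ℝ, 0 < t ∧ (t : ℂ)⁻¹ • s ⊆ V := by
  obtain ⟨r, hr⟩ := absorbs_iff_norm.1 (hs hV)
  have ht : 0 < max r 1 := lt_max_of_lt_right one_pos
  refine ⟨max r 1, ht, ?_⟩
  rw [Set.smul_set_subset_iff₀ (inv_ne_zero (Complex.ofReal_ne_zero.2 ht.ne')), inv_inv]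
  exact hr _ (by rw [Complex.norm_real, Real.norm_of_nonneg ht.le]; exact le_max_left r 1)

theorem exists_totBddAdd_mulClosure_inv_smul {Y : Type} [Ring Y] [Module ℂ Y]
    [τ : TopologicalSpace Y] [IsTopologicalAddGroup Y] [ContinuousSMul ℂ Y]
    [IsCompletelyMetrizableSpace Y]
    (hadm : ∃ U ∈ 𝓝 (0 : Y), ∀ K ⊆ U, IsCompact K → TotBddAdd τ (mulClosure K))
    {T : Set Y} (hT : TotBddAdd τ T) :
    ∃ t : ℝ, 0 < t ∧ TotBddAdd τ (mulClosure ((t : ℂ)⁻¹ • T)) := by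
  obtain ⟨U, hU, hUK⟩ := hadm
  obtain ⟨V, hV, hVc, hVU⟩ := exists_mem_nhds_isClosed_subset hU
  let _ := IsTopologicalAddGroup.rightUniformSpace Y
  have _ : IsUniformAddGroup Y := isUniformAddGroup_of_addCommGroup
  have _ := IsUniformAddGroup.completeSpace_of_isCompletelyMetrizableSpace Y
  have hTB := hT.totallyBounded
  obtain ⟨t, ht, htV⟩ := (hTB.isVonNBounded ℂ).exists_pos_inv_smul_subset hV
  set c : ℂ := (t : ℂ)⁻¹
  have hK : IsCompact (c • closure T) := by
    simpa only [image_smul] using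
      (hTB.closure.isCompact_of_isClosed isClosed_closure).image (continuous_const_smul c)
  have hKU : c • closure T ⊆ U :=
    (smul_closure_subset c T).trans ((closure_minimal htV hVc).trans hVU)
  exact ⟨t, ht, (hUK _ hKU hK).mono (mulClosure_mono (smul_set_mono subset_closure))⟩

theorem stmt10_general (A : Type) [Ring A] [Algebra ℂ A] [TopologicalSpace A]
    (S : ℕ → Subalgebra ℂ A)
    (τ : ∀ n, TopologicalSpace (S n))
    (hring : ∀ n, @IsTopologicalRing (S n) (τ n) _)
    (hsmul : ∀ n, @ContinuousSMul ℂ (S n) _ _ (τ n))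
    (hmetr : ∀ n, ∃ m : MetricSpace (S n),
      m.toUniformSpace.toTopologicalSpace = τ n ∧ @CompleteSpace (S n) m.toUniformSpace)
    (hincl : ∀ n, @Continuous (S n) A (τ n) _ Subtype.val)
    (hadm : ∀ n, ∃ U ∈ @nhds (S n) (τ n) 0,
      ∀ K : Set (S n), K ⊆ U → @IsCompact (S n) (τ n) K → TotBddAdd (τ n) (mulClosure K))
    (hLF : ∀ T : Set A, TotBddAdd (inferInstance : TopologicalSpace A) T →
      ∃ n, T ⊆ (S n : Set A) ∧ TotBddAdd (τ n) (Subtype.val ⁻¹' T)) :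
    ∀ T : Set A, TotBddAdd (inferInstance : TopologicalSpace A) T →
      ∃ t : ℝ, 0 < t ∧
        TotBddAdd (inferInstance : TopologicalSpace A)
          (mulClosure (((t : ℂ))⁻¹ • T)) := by
  intro T hT
  obtain ⟨n, hTn, hTn'⟩ := hLF T hT
  let _ := τ n
  have _ := hring n
  have _ := hsmul n
  have _ : IsCompletelyMetrizableSpace (S n) := ⟨hmetr n⟩
  obtain ⟨t, ht, htb⟩ := exists_totBddAdd_mulClosure_inv_smul (hadm n) hTn'
  refine ⟨t, ht, ?_⟩
  have himage : (S n).val '' mulClosure ((t : ℂ)⁻¹ • (Subtype.val ⁻¹' T)) =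
      mulClosure ((t : ℂ)⁻¹ • T) := by
    rw [image_mulClosure, image_smul_set, Subalgebra.coe_val, image_preimage_eq_of_subset]
    rwa [Subtype.range_coe]
  simpa only [himage] using htb.image (S n).val (hincl n)

/-- An LF-algebra which is an increasing union of admissible Fréchet algebras is
multiplicatively convex for the precompact bornology: every totally bounded subset has, after
rescaling by some `t > 0`, totally bounded multiplicative closure. -/
theorem stmt10 (A : Type) [Ring A] [Algebra ℂ A] [TopologicalSpace A] [IsTopologicalRing A]
    [ContinuousSMul ℂ A]
    (S : ℕ → Subalgebra ℂ A) (hmono : Monotone S)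
    (τ : ∀ n, TopologicalSpace (S n))
    (hring : ∀ n, @IsTopologicalRing (S n) (τ n) _)
    (hsmul : ∀ n, @ContinuousSMul ℂ (S n) _ _ (τ n))
    (hmetr : ∀ n, ∃ m : MetricSpace (S n),
      m.toUniformSpace.toTopologicalSpace = τ n ∧ @CompleteSpace (S n) m.toUniformSpace)
    (hincl : ∀ n, @Continuous (S n) A (τ n) _ Subtype.val)
    (hadm : ∀ n, ∃ U ∈ @nhds (S n) (τ n) 0,
      ∀ K : Set (S n), K ⊆ U → @IsCompact (S n) (τ n) K → TotBddAdd (τ n) (mulClosure K))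
    (hLF : ∀ T : Set A, TotBddAdd (inferInstance : TopologicalSpace A) T →
      ∃ n, T ⊆ (S n : Set A) ∧ TotBddAdd (τ n) (Subtype.val ⁻¹' T)) :
    ∀ T : Set A, TotBddAdd (inferInstance : TopologicalSpace A) T →
      ∃ t : ℝ, 0 < t ∧
        TotBddAdd (inferInstance : TopologicalSpace A)
          (mulClosure (((t : ℂ))⁻¹ • T)) :=
  stmt10_general A S τ hring hsmul hmetr hincl hadm hLF
end

section
/- Let R be a ring and M a bounded chain complex of left R-modules with differentials d_n : M_n → M_{n−1}. Suppose given R-linear maps ε_n, F_n : M_n → M_n and h_n : M_n → M_{n+1} for all n such that: (i) id_{M_n} − ε_n − F_n = d_{n+1} ∘ h_n + h_{n−1} ∘ d_n for every n; (ii) each F_n factors through a finitely generated free R-module; and (iii) each id_{M_n} − ε_n is a bijective R-linear map. Then the identity chain map of M is chain homotopic to a chain map k : M → M each of whose components k_n : M_n → M_n factors through a finitely generated free R-module; explicitly, writing φ_n := (id_{M_n} − ε_n)⁻¹, one may take k := φ∘F − (d∘φ − φ∘d)∘h with chain homotopy given by the maps φ_{n+1} ∘ h_n. -/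
open CategoryTheory

/-!
Put `u := id - ε` and `φ := u⁻¹`. The hypothesis says that `u - F = dh + hd` is null-homotopic,
hence commutes with `d`; so the graded commutators satisfy `d(u) = d(F)` and
`d(φ) = -φ ∘ d(u) ∘ φ = -φ ∘ d(F) ∘ φ`, which factors through `F`. The null-homotopic map
`d(φh) = dφh + φhd` equals `id - (φF - d(φ)h)`, so `id` is homotopic to `k := φF - d(φ)h`, a sum of
maps of the form `a ∘ F_m ∘ b`.
-/

namespace FactorsThroughFinFree

variable {R : Type} [Ring R] {X Y : Type} [AddCommGroup X] [Module R X] [AddCommGroup Y]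
  [Module R Y]

theorem add {e e' : X →ₗ[R] Y} (he : FactorsThroughFinFree e) (he' : FactorsThroughFinFree e') :
    FactorsThroughFinFree (e + e') := by
  obtain ⟨k, α, β, rfl⟩ := he
  obtain ⟨k', α', β', rfl⟩ := he'
  let E : (Fin (k + k') → R) ≃ₗ[R] (Fin k → R) × (Fin k' → R) :=
    (LinearEquiv.funCongrLeft R R finSumFinEquiv).trans
      (LinearEquiv.sumArrowLequivProdArrow (Fin k) (Fin k') R R)
  refine ⟨k + k', E.symm.toLinearMap ∘ₗ α.prod α', (β.coprod β') ∘ₗ E.toLinearMap, ?_⟩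
  ext x
  simp [LinearMap.coprod_apply]

theorem comp_comp {W Z : Type} [AddCommGroup W] [Module R W] [AddCommGroup Z] [Module R Z]
    {e : X →ₗ[R] Y} (he : FactorsThroughFinFree e) (a : W →ₗ[R] X) (b : Y →ₗ[R] Z) :
    FactorsThroughFinFree (b ∘ₗ e ∘ₗ a) := by
  obtain ⟨k, α, β, rfl⟩ := he
  exact ⟨k, α ∘ₗ a, b ∘ₗ β, rfl⟩

end FactorsThroughFinFree

section Preadditive

variable {V : Type*} [Category V] [Preadditive V]

theorem comp_sub_comp_eq_conj {A B : V} (d : B ⟶ A) {u φ : A ⟶ A} {u' φ' : B ⟶ B}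
    (hu : u ≫ φ = 𝟙 A) (hu' : φ' ≫ u' = 𝟙 B) :
    φ' ≫ d - d ≫ φ = φ' ≫ (d ≫ u - u' ≫ d) ≫ φ := by
  simp only [Preadditive.comp_sub, Preadditive.sub_comp, Category.assoc, hu,
    reassoc_of% hu', Category.comp_id]

theorem HomologicalComplex.d_comp_sub_comp_d_eq_of_sub_eq_f {ι : Type*} {c : ComplexShape ι}
    {M : HomologicalComplex V c} (E : M ⟶ M) {u F : ∀ i, M.X i ⟶ M.X i}
    (hE : ∀ i, u i - F i = E.f i) (i j : ι) :
    M.d i j ≫ u j - u i ≫ M.d i j = M.d i j ≫ F j - F i ≫ M.d i j := by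
  have := E.comm i j
  rw [← hE, ← hE, Preadditive.sub_comp, Preadditive.comp_sub] at this
  grind

def Homotopy.subNullHomotopicMap {ι : Type*} {c : ComplexShape ι}
    {C D : HomologicalComplex V c} (f : C ⟶ D) (hom : ∀ i j, C.X i ⟶ D.X j)
    (zero : ∀ i j, ¬c.Rel j i → hom i j = 0) : Homotopy f (f - nullHomotopicMap hom) where
  hom := hom
  zero := zero
  comm i := by simp [nullHomotopicMap]

namespace ChainComplex

variable {M N : ChainComplex V ℤ}

def degreeOneHom (s : ∀ n, M.X n ⟶ N.X (n + 1)) (i j : ℤ) : M.X i ⟶ N.X j :=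
  if hij : i + 1 = j then s i ≫ eqToHom (congrArg N.X hij) else 0

section

variable (s : ∀ n, M.X n ⟶ N.X (n + 1))

@[simp]
theorem degreeOneHom_self_add_one (n : ℤ) : degreeOneHom s n (n + 1) = s n := by
  simp [degreeOneHom]

theorem degreeOneHom_eq_zero (i j : ℤ) (hij : ¬(ComplexShape.down ℤ).Rel j i) :
    degreeOneHom s i j = 0 :=
  dif_neg hij

theorem nullHomotopicMap_degreeOneHom_f (n : ℤ) :
    (Homotopy.nullHomotopicMap (degreeOneHom s)).f n =
      s n ≫ N.d (n + 1) n +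
        M.d n (n - 1) ≫ s (n - 1) ≫ eqToHom (congrArg N.X (Int.sub_add_cancel n 1)) := by
  rw [Homotopy.nullHomotopicMap_f (ComplexShape.down_mk (n + 1) n rfl)
    (ComplexShape.down_mk n (n - 1) (Int.sub_add_cancel n 1)), add_comm]
  simp [degreeOneHom]

end

variable {u F φ : ∀ n, M.X n ⟶ M.X n} {h : ∀ n, M.X n ⟶ M.X (n + 1)}

theorem id_sub_nullHomotopicMap_degreeOneHom_comp_f
    (hu : ∀ n, u n - F n = (Homotopy.nullHomotopicMap (degreeOneHom h)).f n)
    (hφ : ∀ n, u n ≫ φ n = 𝟙 (M.X n)) (n : ℤ) :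
    (𝟙 M - Homotopy.nullHomotopicMap (degreeOneHom fun n => h n ≫ φ (n + 1))).f n =
      F n ≫ φ n - h n ≫ (φ (n + 1) ≫ M.d (n + 1) n - M.d (n + 1) n ≫ φ n) := by
  have hdh : M.d n (n - 1) ≫ h (n - 1) ≫ eqToHom (congrArg M.X (Int.sub_add_cancel n 1)) =
      u n - F n - h n ≫ M.d (n + 1) n := by
    rw [hu, nullHomotopicMap_degreeOneHom_f]
    abel
  rw [HomologicalComplex.sub_f_apply, HomologicalComplex.id_f, nullHomotopicMap_degreeOneHom_f]
  rw [Category.assoc, Category.assoc,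
    eqToHom_naturality (f := M.X) (g := M.X) φ (Int.sub_add_cancel n 1), reassoc_of% hdh]
  simp only [Preadditive.sub_comp, Preadditive.comp_sub, Category.assoc, hφ]
  abel

end ChainComplex

end Preadditive

theorem ModuleCat.factorsThroughFinFree_perturbation {R : Type} [Ring R] {A B : ModuleCat.{0} R}
    (d : B ⟶ A) (h : A ⟶ B) {u F φ : A ⟶ A} {u' F' φ' : B ⟶ B}
    (hF : FactorsThroughFinFree F.hom) (hF' : FactorsThroughFinFree F'.hom)
    (hu : u ≫ φ = 𝟙 A) (hu' : φ' ≫ u' = 𝟙 B)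
    (hd : d ≫ u - u' ≫ d = d ≫ F - F' ≫ d) :
    FactorsThroughFinFree (F ≫ φ - h ≫ (φ' ≫ d - d ≫ φ)).hom := by
  have hsplit : F ≫ φ - h ≫ (φ' ≫ d - d ≫ φ) =
      (𝟙 A - h ≫ φ' ≫ d) ≫ F ≫ φ + (h ≫ φ') ≫ F' ≫ d ≫ φ := by
    rw [comp_sub_comp_eq_conj d hu hu', hd]
    simp only [Preadditive.sub_comp, Preadditive.comp_sub, Category.assoc, Category.id_comp]
    abel
  rw [hsplit, hom_add, hom_comp, hom_comp F, hom_comp, hom_comp F', LinearMap.comp_assoc,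
    LinearMap.comp_assoc]
  exact (hF.comp_comp _ _).add (hF'.comp_comp _ _)

/-- Perturbation lemma: if, on a bounded chain complex `M`, the identity differs from an
invertible degree-zero map `id − ε` by a degreewise finite-rank map `F` up to the chain
homotopy `h` (i.e. `id − ε − F = d∘h + h∘d`), then the identity chain map of `M` is chain
homotopic to a chain map whose components factor through finitely generated free modules;
explicitly, writing `φ := (id − ε)⁻¹`, one may take `k := φ∘F − (d∘φ − φ∘d)∘h`, with chain
homotopy given by the maps `φ_{n+1} ∘ h_n`. -/
theorem stmt11 (R : Type) [Ring R] (M : ChainComplex (ModuleCat.{0} R) ℤ)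
    (ε F : ∀ n : ℤ, M.X n ⟶ M.X n) (h : ∀ n : ℤ, M.X n ⟶ M.X (n + 1))
    (hhtpy : ∀ n : ℤ, 𝟙 (M.X n) - ε n - F n =
      h n ≫ M.d (n + 1) n +
        M.d n (n - 1) ≫ h (n - 1) ≫ eqToHom (congrArg M.X (by omega : n - 1 + 1 = n)))
    (hF : ∀ n : ℤ, FactorsThroughFinFree ((F n).hom : M.X n →ₗ[R] M.X n))
    (φ : ∀ n : ℤ, M.X n ⟶ M.X n)
    (hφ : ∀ n : ℤ, (𝟙 (M.X n) - ε n) ≫ φ n = 𝟙 (M.X n) ∧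
      φ n ≫ (𝟙 (M.X n) - ε n) = 𝟙 (M.X n)) :
    ∃ k : M ⟶ M,
      (∀ n : ℤ, k.f n =
        F n ≫ φ n - h n ≫ (φ (n + 1) ≫ M.d (n + 1) n - M.d (n + 1) n ≫ φ n)) ∧
      (∀ n : ℤ, FactorsThroughFinFree ((k.f n).hom : M.X n →ₗ[R] M.X n)) ∧
      ∃ H : Homotopy (𝟙 M) k, ∀ n : ℤ, H.hom n (n + 1) = h n ≫ φ (n + 1) := by
  have hE (n : ℤ) :
      𝟙 (M.X n) - ε n - F n = (Homotopy.nullHomotopicMap (ChainComplex.degreeOneHom h)).f n :=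
    (hhtpy n).trans (ChainComplex.nullHomotopicMap_degreeOneHom_f h n).symm
  have hk := ChainComplex.id_sub_nullHomotopicMap_degreeOneHom_comp_f hE (fun n => (hφ n).1)
  refine ⟨_, hk, fun n => ?_, Homotopy.subNullHomotopicMap _ _
    (ChainComplex.degreeOneHom_eq_zero _),
    fun n => ChainComplex.degreeOneHom_self_add_one (fun n => h n ≫ φ (n + 1)) n⟩
  rw [hk]
  exact ModuleCat.factorsThroughFinFree_perturbation _ _ (hF n) (hF (n + 1)) (hφ n).1
    (hφ (n + 1)).2 (HomologicalComplex.d_comp_sub_comp_d_eq_of_sub_eq_f _ hE _ _)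
end
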